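/- Let G_T be a G-system at t₀ and G_t ∈ G_T with J := G_t ∩ G_{t₀}. If G_t is reachable from G_{t₀} by a finite sequence of mutations, then there exists a sequence of mutations (μ_{g'₁},…,μ_{g'_m}) with each g'ⱼ ∉ J such that G_t = μ_{g'_m} ∘ ⋯ ∘ μ_{g'₁}(G_{t₀}); i.e., one can pass from G_{t₀} to G_t never mutating at a common vector of G_t and G_{t₀}. -/

import Mathlib

/-- A `G`-system at `t₀` (Definition 5.1.1): a collection of ℤ-bases of ℤⁿ, indexed by `T`,
satisfying the Mutation Condition, the Co-Bongartz Completion Condition and the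
Uniqueness Condition. -/
structure GSystem (n : ℕ) (T : Type) (t₀ : T) where
  g : T → Fin n → (Fin n → ℤ)
  indep : ∀ t, LinearIndependent ℤ (g t)
  span : ∀ t, Submodule.span ℤ (Set.range (g t)) = ⊤
  mutation : ∀ (t : T) (k : Fin n), ∃ t₁ : T,
    Set.range (g t) ∩ Set.range (g t₁) = Set.range (g t) \ {g t k}
  coBongartz : ∀ (t : T) (J : Set (Fin n → ℤ)), J ⊆ Set.range (g t₀) →
    ∃ t' : T, J ⊆ Set.range (g t') ∧
      ∀ (k : Fin n) (r : Fin n → ℤ), g t k = ∑ i, r i • g t' i →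
        ∀ i, g t' i ∉ J → 0 ≤ r i
  uniqueness : ∀ (u v : T) (I I' : Finset (Fin n)) (r r' : Fin n → ℤ),
    (∀ i ∈ I, 0 < r i) → (∀ j ∈ I', 0 < r' j) →
    (∑ i ∈ I, r i • g u i) = (∑ j ∈ I', r' j • g v j) →
    ∃ σ : Fin n → Fin n, Set.BijOn σ ↑I' ↑I ∧
      ∀ j ∈ I', r' j = r (σ j) ∧ g v j = g u (σ j)

/-- `G_{t'}` is a co-Bongartz completion of `J` with respect to `G_t`
(conditions (a) and (b) of Proposition-Definition 5.1.4). -/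
def GSystem.IsCoB {n : ℕ} {T : Type} {t₀ : T} (S : GSystem n T t₀)
    (J : Set (Fin n → ℤ)) (t t' : T) : Prop :=
  J ⊆ Set.range (S.g t') ∧
  ∀ (k : Fin n) (r : Fin n → ℤ), S.g t k = ∑ i, r i • S.g t' i →
    ∀ i, S.g t' i ∉ J → 0 ≤ r i

/-- `G_{t'}` is the mutation of `G_t` at `g_{k;t}`, i.e.
`G_t ∩ G_{t'} = G_t \ {g_{k;t}}` (Proposition-Definition 5.1.3). -/
def GSystem.IsMutationAt {n : ℕ} {T : Type} {t₀ : T} (S : GSystem n T t₀)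
    (t t' : T) (k : Fin n) : Prop :=
  Set.range (S.g t) ∩ Set.range (S.g t') = Set.range (S.g t) \ {S.g t k}

/-- A single step between bases of the `G`-system: either they are equal as
sets (identified bases) or one is a mutation of the other. -/
def GSystem.Step {n : ℕ} {T : Type} {t₀ : T} (S : GSystem n T t₀) (a b : T) : Prop :=
  Set.range (S.g a) = Set.range (S.g b) ∨ ∃ k : Fin n, S.IsMutationAt a b k

/-!
Fix `J = G_t ∩ G_{t₀}` and send every basis `G_s` to a co-Bongartz completion `T_J(G_s)` of `J`
with respect to `G_s`; as a set it is unique. The key point (Theorem 5.2.1) is that `T_J` turns a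
mutation into either the identity or a mutation at a vector outside `J`. Indeed, a vector common to
`G_s` and `G_{s'}` has nonnegative coordinates outside `J` in both `T_J(G_s)` and `T_J(G_{s'})`;
after adding a large multiple of `∑ J` both expansions become nonnegative, so by the Uniqueness
Condition they involve the same vectors. Hence the `n - 1` vectors shared by `G_s` and `G_{s'}` lie
in the span of the vectors shared by `T_J(G_s)` and `T_J(G_{s'})`, and there are at least `n - 1` of
those. Since `T_J` fixes the bases containing `J`, in particular `G_{t₀}` and `G_t`, applying it
along a mutation sequence from `G_{t₀}` to `G_t` gives one that never mutates inside `J`.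
-/

theorem Relation.ReflTransGen.exists_fin_path {α : Type*} {r : α → α → Prop} {a b : α}
    (h : Relation.ReflTransGen r a b) :
    ∃ (m : ℕ) (u : Fin (m + 1) → α),
      u 0 = a ∧ u (Fin.last m) = b ∧ ∀ i : Fin m, r (u i.castSucc) (u i.succ) := by
  induction h with
  | refl => exact ⟨0, fun _ => a, rfl, rfl, Fin.elim0⟩
  | @tail _ c _ hbc ih =>
    obtain ⟨m, u, hu0, hlast, hsteps⟩ := ih
    refine ⟨m + 1, Fin.snoc u c, by simpa using hu0, by simp, Fin.lastCases ?_ fun i => ?_⟩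
    · simpa [hlast] using hbc
    · rw [Fin.succ_castSucc, Fin.snoc_castSucc, Fin.snoc_castSucc]
      exact hsteps i

theorem LinearIndepOn.ncard_le_ncard_of_subset_span {R M : Type*} [Ring R]
    [StrongRankCondition R] [AddCommGroup M] [Module R M] {X Y : Set M}
    (hX : LinearIndepOn R id X) (hY : Y.Finite) (h : X ⊆ Submodule.span R Y) :
    X.ncard ≤ Y.ncard := by
  have := hY.fintype
  have hcard := linearIndependent_le_span' _ hX.linearIndependent Y (by simpa using h)
  have : Finite X := hX.linearIndependent.finite_of_le_span_finite _ Y (by simpa using h)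
  have := Fintype.ofFinite X
  rw [Set.ncard_eq_toFinset_card', Set.ncard_eq_toFinset_card', Set.toFinset_card,
    Set.toFinset_card]
  rw [Cardinal.mk_fintype] at hcard
  exact_mod_cast hcard

namespace GSystem

open Set

variable {n : ℕ} {T : Type} {t₀ : T} (S : GSystem n T t₀)

lemma g_injective (u : T) : Function.Injective (S.g u) :=
  (S.indep u).injective

lemma ncard_range (u : T) : (range (S.g u)).ncard = n := by
  rw [← image_univ, ncard_image_of_injective _ (S.g_injective u), ncard_univ,
    Nat.card_eq_fintype_card, Fintype.card_fin]

lemma range_eq_of_subset {u u' : T} (h : range (S.g u) ⊆ range (S.g u')) :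
    range (S.g u) = range (S.g u') :=
  eq_of_subset_of_ncard_le h (by rw [S.ncard_range, S.ncard_range]) (finite_range _)

lemma range_eq_or_isMutationAt {u u' : T}
    (h : n - 1 ≤ (range (S.g u) ∩ range (S.g u')).ncard) :
    range (S.g u) = range (S.g u') ∨
      ∃ k, S.IsMutationAt u u' k ∧ S.g u k ∉ range (S.g u') := by
  by_cases hsub : range (S.g u) ⊆ range (S.g u')
  · exact .inl (S.range_eq_of_subset hsub)
  obtain ⟨_, ⟨k, rfl⟩, hk⟩ := not_subset.1 hsub
  refine .inr ⟨k, eq_of_subset_of_ncard_le ?_ ?_ (finite_range _ |>.sdiff), hk⟩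
  · exact fun x hx => ⟨hx.1, fun hxk => hk (hxk ▸ hx.2)⟩
  · rwa [ncard_sdiff_singleton_of_mem (mem_range_self k), S.ncard_range]

noncomputable def basis (u : T) : Module.Basis (Fin n) ℤ (Fin n → ℤ) :=
  .mk (S.indep u) (S.span u).ge

@[simp]
lemma basis_apply (u : T) (i : Fin n) : S.basis u i = S.g u i :=
  Module.Basis.mk_apply _ _ _

lemma repr_eq_of_eq_sum {u : T} {v r : Fin n → ℤ} (h : v = ∑ i, r i • S.g u i) :
    ⇑((S.basis u).repr v) = r := by
  rw [← (S.basis u).equivFun_apply, h]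
  simpa using (S.basis u).equivFun.apply_symm_apply r

lemma sum_repr (u : T) (v : Fin n → ℤ) : ∑ i, (S.basis u).repr v i • S.g u i = v := by
  simpa using (S.basis u).sum_repr v

lemma isCoB_self {J : Set (Fin n → ℤ)} {s : T} (h : J ⊆ range (S.g s)) : S.IsCoB J s s := by
  refine ⟨h, fun k r hr i _ => ?_⟩
  rw [← S.repr_eq_of_eq_sum hr, ← S.basis_apply, Module.Basis.repr_self]
  exact Finsupp.single_nonneg.2 zero_le_one i

lemma mem_range_of_sum_eq {u u' : T} {c c' : Fin n → ℤ} (hc : ∀ i, 0 ≤ c i)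
    (hc' : ∀ j, 0 ≤ c' j) (h : ∑ i, c i • S.g u i = ∑ j, c' j • S.g u' j) {i : Fin n}
    (hi : 0 < c i) : S.g u i ∈ range (S.g u') := by
  classical
  have sum_pos_coeffs : ∀ (w : T) (d : Fin n → ℤ), (∀ i, 0 ≤ d i) →
      ∑ i with 0 < d i, d i • S.g w i = ∑ i, d i • S.g w i := fun w d hd =>
    Finset.sum_filter_of_ne fun i _ hne =>
      (hd i).lt_of_ne' fun h0 => hne (by rw [h0, zero_smul])
  obtain ⟨σ, hσ, hcoeff⟩ := S.uniqueness u u' {i | 0 < c i} {j | 0 < c' j} c c'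
    (fun i hi => (Finset.mem_filter.1 hi).2) (fun j hj => (Finset.mem_filter.1 hj).2)
    (by rw [sum_pos_coeffs u c hc, sum_pos_coeffs u' c' hc', h])
  obtain ⟨j, hj, rfl⟩ := hσ.surjOn (by simpa using hi)
  exact ⟨j, (hcoeff j hj).2⟩

open Classical in
lemma sum_repr_add_ite_smul {J : Set (Fin n → ℤ)} {u : T} (hJ : J ⊆ range (S.g u))
    (hJf : J.Finite) (v : Fin n → ℤ) (N : ℤ) :
    ∑ i, ((S.basis u).repr v i + if S.g u i ∈ J then N else 0) • S.g u i =
      v + N • ∑ x ∈ hJf.toFinset, x := by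
  have hJ_image : (Finset.univ.filter fun i => S.g u i ∈ J).image (S.g u) = hJf.toFinset := by
    ext x
    simp only [Finset.mem_image, Finset.mem_filter, Finset.mem_univ, true_and,
      Finite.mem_toFinset]
    constructor
    · rintro ⟨i, hi, rfl⟩
      exact hi
    · intro hx
      obtain ⟨i, rfl⟩ := hJ hx
      exact ⟨i, hx, rfl⟩
  simp only [add_smul, Finset.sum_add_distrib, sum_repr, ite_smul, zero_smul,
    Finset.sum_ite, Finset.sum_const_zero, add_zero, ← Finset.smul_sum, ← hJ_image,
    Finset.sum_image fun i _ j _ h => S.g_injective u h]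

def IsMutationOutside (J : Set (Fin n → ℤ)) (u u' : T) : Prop :=
  ∃ k, S.IsMutationAt u u' k ∧ S.g u k ∉ J

variable {S}

lemma IsMutationOutside.of_range_eq_left {J : Set (Fin n → ℤ)} {u₁ u₂ u' : T}
    (h : range (S.g u₁) = range (S.g u₂)) (hmut : S.IsMutationOutside J u₁ u') :
    S.IsMutationOutside J u₂ u' := by
  obtain ⟨k, hk, hkJ⟩ := hmut
  obtain ⟨k₂, hk₂⟩ : S.g u₁ k ∈ range (S.g u₂) := h ▸ mem_range_self k
  refine ⟨k₂, ?_, hk₂ ▸ hkJ⟩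
  rw [IsMutationAt, ← h, hk₂]
  exact hk

lemma Step.le_ncard_inter {s s' : T} (h : S.Step s s') :
    n - 1 ≤ (range (S.g s) ∩ range (S.g s')).ncard := by
  rcases h with h | ⟨k, hk⟩
  · rw [← h, inter_self, S.ncard_range]
    omega
  · rw [hk, ncard_sdiff_singleton_of_mem (mem_range_self k), S.ncard_range]

section IsCoB

variable {J : Set (Fin n → ℤ)} {s s' u u' : T}

lemma IsCoB.repr_nonneg (hu : S.IsCoB J s u) {v : Fin n → ℤ} (hv : v ∈ range (S.g s))
    {i : Fin n} (hi : S.g u i ∉ J) : 0 ≤ (S.basis u).repr v i := by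
  obtain ⟨k, rfl⟩ := hv
  exact hu.2 k _ (S.sum_repr u _).symm i hi

lemma IsCoB.mem_range_of_repr_ne_zero (hu : S.IsCoB J s u) (hu' : S.IsCoB J s' u')
    {v : Fin n → ℤ} (hv : v ∈ range (S.g s)) (hv' : v ∈ range (S.g s')) {i : Fin n}
    (hi : (S.basis u).repr v i ≠ 0) : S.g u i ∈ range (S.g u') := by
  classical
  by_cases hiJ : S.g u i ∈ J
  · exact hu'.1 hiJ
  have hJf : J.Finite := (finite_range _).subset hu.1
  set N := ∑ j, (|(S.basis u).repr v j| + |(S.basis u').repr v j|)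
  have hN : ∀ j, |(S.basis u).repr v j| ≤ N ∧ |(S.basis u').repr v j| ≤ N := fun j => by
    have := Finset.single_le_sum
      (f := fun j => |(S.basis u).repr v j| + |(S.basis u').repr v j|)
      (fun j _ => by positivity) (Finset.mem_univ j)
    constructor <;> linarith [abs_nonneg ((S.basis u).repr v j),
      abs_nonneg ((S.basis u').repr v j)]
  -- Adding `N • ∑ J` to `v` makes both expansions nonnegative.
  have shift_nonneg : ∀ {s₁ w : T}, S.IsCoB J s₁ w → v ∈ range (S.g s₁) →
      (∀ j, |(S.basis w).repr v j| ≤ N) →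
      ∀ j, 0 ≤ (S.basis w).repr v j + if S.g w j ∈ J then N else 0 := by
    intro s₁ w hw hv hN j
    split_ifs with hj
    · linarith [neg_abs_le ((S.basis w).repr v j), hN j]
    · simpa using hw.repr_nonneg hv hj
  refine S.mem_range_of_sum_eq (shift_nonneg hu hv fun j => (hN j).1)
    (shift_nonneg hu' hv' fun j => (hN j).2)
    ((S.sum_repr_add_ite_smul hu.1 hJf v N).trans (S.sum_repr_add_ite_smul hu'.1 hJf v N).symm) ?_
  simpa [hiJ] using (hu.repr_nonneg hv hiJ).lt_of_ne' hi

lemma IsCoB.inter_subset_span_inter (hu : S.IsCoB J s u) (hu' : S.IsCoB J s' u') :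
    range (S.g s) ∩ range (S.g s') ⊆ Submodule.span ℤ (range (S.g u) ∩ range (S.g u')) := by
  rintro v ⟨hv, hv'⟩
  refine Submodule.span_mono ?_ ((S.basis u).mem_span_repr_support v)
  rintro _ ⟨i, hi, rfl⟩
  rw [basis_apply]
  exact ⟨mem_range_self i,
    hu.mem_range_of_repr_ne_zero hu' hv hv' (Finsupp.mem_support_iff.1 hi)⟩

lemma IsCoB.ncard_inter_le (hu : S.IsCoB J s u) (hu' : S.IsCoB J s' u') :
    (range (S.g s) ∩ range (S.g s')).ncard ≤ (range (S.g u) ∩ range (S.g u')).ncard :=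
  ((linearIndepOn_id_range_iff (S.g_injective s)).2 (S.indep s)).mono inter_subset_left
    |>.ncard_le_ncard_of_subset_span ((finite_range _).inter_of_left _)
      (hu.inter_subset_span_inter hu')

lemma IsCoB.range_eq (hu : S.IsCoB J s u) (hu' : S.IsCoB J s u') :
    range (S.g u) = range (S.g u') := by
  have hcard := hu.ncard_inter_le hu'
  rw [inter_self, S.ncard_range s] at hcard
  refine S.range_eq_of_subset (inter_eq_left.1 (eq_of_subset_of_ncard_le inter_subset_left ?_
    (finite_range _)))
  rwa [S.ncard_range]

lemma IsCoB.range_eq_or_isMutationOutside (hu : S.IsCoB J s u) (hu' : S.IsCoB J s' u')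
    (h : S.Step s s') : range (S.g u) = range (S.g u') ∨ S.IsMutationOutside J u u' :=
  (S.range_eq_or_isMutationAt (h.le_ncard_inter.trans (hu.ncard_inter_le hu'))).imp_right
    fun ⟨k, hk, hkJ⟩ => ⟨k, hk, fun hJ => hkJ (hu'.1 hJ)⟩

end IsCoB

theorem exists_reflTransGen_isMutationOutside {J : Set (Fin n → ℤ)}
    (hJ : J ⊆ range (S.g t₀)) {s u : T} (hs : Relation.ReflTransGen S.Step t₀ s)
    (hu : S.IsCoB J s u) :
    ∃ x, Relation.ReflTransGen (S.IsMutationOutside J) t₀ x ∧ range (S.g x) = range (S.g u) := by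
  induction hs generalizing u with
  | refl => exact ⟨t₀, .refl, (S.isCoB_self hJ).range_eq hu⟩
  | @tail b _ _ hstep ih =>
    obtain ⟨ub, hub⟩ : ∃ ub, S.IsCoB J b ub := S.coBongartz b J hJ
    obtain ⟨x, hx, hxb⟩ := ih hub
    rcases hub.range_eq_or_isMutationOutside hu hstep with h | h
    · exact ⟨x, hx, hxb.trans h⟩
    · exact ⟨u, hx.tail (h.of_range_eq_left hxb.symm), rfl⟩

end GSystem

/-- Theorem 5.2.3: if `G_t` is reachable from the initial basis `G_{t₀}` by a
finite sequence of mutations, then there is a sequence of mutations from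
`G_{t₀}` to `G_t` which never mutates at a vector of `J = G_t ∩ G_{t₀}`. -/
theorem stmt8 {n : ℕ} {T : Type} {t₀ : T} (S : GSystem n T t₀) (t : T)
    (hreach : Relation.ReflTransGen S.Step t₀ t) :
    ∃ (m : ℕ) (u : Fin (m + 1) → T) (k : Fin m → Fin n),
      u 0 = t₀ ∧
      Set.range (S.g (u (Fin.last m))) = Set.range (S.g t) ∧
      ∀ i : Fin m, S.IsMutationAt (u i.castSucc) (u i.succ) (k i) ∧
        S.g (u i.castSucc) (k i) ∉ Set.range (S.g t) ∩ Set.range (S.g t₀) := by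
  have hJ₀ : Set.range (S.g t) ∩ Set.range (S.g t₀) ⊆ Set.range (S.g t₀) :=
    Set.inter_subset_right
  obtain ⟨u, hu⟩ : ∃ u, S.IsCoB _ t u := S.coBongartz t _ hJ₀
  have hut : Set.range (S.g u) = Set.range (S.g t) :=
    hu.range_eq (S.isCoB_self Set.inter_subset_left)
  obtain ⟨x, hx, hxu⟩ := GSystem.exists_reflTransGen_isMutationOutside hJ₀ hreach hu
  obtain ⟨m, w, hw0, hwlast, hsteps⟩ := hx.exists_fin_path
  choose k hk using hsteps
  exact ⟨m, w, k, hw0, by rw [hwlast, hxu, hut], hk⟩
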